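/- Let (X, 𝒰) be a Hausdorff uniform space without isolated points and (X, f_{1,∞}) a minimal periodic non-autonomous system whose induced autonomous system (X, g) has a transitive point. Then (X, f_{1,∞}) is either sensitive or equicontinuous. -/

import Mathlib

open Topology Filter Set
open scoped Uniformity

/-- `traj f n = f_n ∘ ⋯ ∘ f_1` (and `traj f 0 = id`), i.e. `f_1^n`. -/
def traj {X : Type*} (f : ℕ → X → X) : ℕ → X → X
  | 0 => id
  | n + 1 => f (n + 1) ∘ traj f n

/-- The family `f` is periodic with period `p`. -/
def PeriodicFam {X : Type*} (f : ℕ → X → X) (p : ℕ) : Prop :=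
  ∀ n, f (n + p) = f n

/-- A set of naturals is thick: it contains arbitrarily long blocks of consecutive integers. -/
def Thick (T : Set ℕ) : Prop :=
  ∀ k : ℕ, ∃ n : ℕ, ∀ i ≤ k, n + i ∈ T

/-- A set of naturals is syndetic: it has bounded gaps. -/
def Syndetic (S : Set ℕ) : Prop :=
  ∃ M : ℕ, ∀ n : ℕ, ∃ m ∈ S, n ≤ m ∧ m ≤ n + M

/-- `x` is a transitive point of the non-autonomous system `(X, f_{1,∞})`. -/
def TransPt {X : Type*} [TopologicalSpace X] (f : ℕ → X → X) (x : X) : Prop :=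
  Dense (Set.range fun n => traj f n x)

/-- `x` is a transitive point of the autonomous system `(X, g)`. -/
def TransPtAut {X : Type*} [TopologicalSpace X] (g : X → X) (x : X) : Prop :=
  Dense (Set.range fun n => g^[n] x)

/-- `x` is an equicontinuity point of `(X, f_{1,∞})` on a uniform space. -/
def EqPt {X : Type*} [UniformSpace X] (f : ℕ → X → X) (x : X) : Prop :=
  ∀ E ∈ 𝓤 X, ∃ D ∈ 𝓤 X, ∀ y : X, (x, y) ∈ D → ∀ n : ℕ, (traj f n x, traj f n y) ∈ E

/-- `x` is a syndetically equicontinuous point of `(X, f_{1,∞})`. -/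
def SynEqPt {X : Type*} [UniformSpace X] (f : ℕ → X → X) (x : X) : Prop :=
  ∀ E ∈ 𝓤 X, ∃ U ∈ 𝓝 x,
    Syndetic {n : ℕ | ∀ x₁ ∈ U, ∀ x₂ ∈ U, (traj f n x₁, traj f n x₂) ∈ E}

/-- `x` is a syndetically equicontinuous point of the autonomous system `(X, g)`. -/
def SynEqPtAut {X : Type*} [UniformSpace X] (g : X → X) (x : X) : Prop :=
  ∀ E ∈ 𝓤 X, ∃ U ∈ 𝓝 x,
    Syndetic {n : ℕ | ∀ x₁ ∈ U, ∀ x₂ ∈ U, (g^[n] x₁, g^[n] x₂) ∈ E}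

/-- `N(U, D)` for the non-autonomous system. -/
def NSet {X : Type*} (f : ℕ → X → X) (U : Set X) (D : Set (X × X)) : Set ℕ :=
  {n : ℕ | 0 < n ∧ ∃ x ∈ U, ∃ y ∈ U, (traj f n x, traj f n y) ∉ D}

/-- `N(U, D)` for the autonomous system. -/
def NSetAut {X : Type*} (g : X → X) (U : Set X) (D : Set (X × X)) : Set ℕ :=
  {n : ℕ | 0 < n ∧ ∃ x ∈ U, ∃ y ∈ U, (g^[n] x, g^[n] y) ∉ D}

/-- Sensitivity of `(X, f_{1,∞})`. -/
def Sensitive {X : Type*} [UniformSpace X] (f : ℕ → X → X) : Prop :=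
  ∃ D ∈ 𝓤 X, ∀ U : Set X, IsOpen U → U.Nonempty → (NSet f U D).Nonempty

/-- Thick sensitivity of `(X, f_{1,∞})`. -/
def ThickSensitive {X : Type*} [UniformSpace X] (f : ℕ → X → X) : Prop :=
  ∃ D ∈ 𝓤 X, ∀ U : Set X, IsOpen U → U.Nonempty → Thick (NSet f U D)

/-- Thick sensitivity of the autonomous system `(X, g)`. -/
def ThickSensitiveAut {X : Type*} [UniformSpace X] (g : X → X) : Prop :=
  ∃ D ∈ 𝓤 X, ∀ U : Set X, IsOpen U → U.Nonempty → Thick (NSetAut g U D)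

/-- Multi-sensitivity of `(X, f_{1,∞})`. -/
def MultiSensitive {X : Type*} [UniformSpace X] (f : ℕ → X → X) : Prop :=
  ∃ D ∈ 𝓤 X, ∀ (k : ℕ) (U : Fin (k + 1) → Set X),
    (∀ i, IsOpen (U i)) → (∀ i, (U i).Nonempty) → (⋂ i, NSet f (U i) D).Nonempty

/-- Multi-sensitivity of the autonomous system `(X, g)`. -/
def MultiSensitiveAut {X : Type*} [UniformSpace X] (g : X → X) : Prop :=
  ∃ D ∈ 𝓤 X, ∀ (k : ℕ) (U : Fin (k + 1) → Set X),
    (∀ i, IsOpen (U i)) → (∀ i, (U i).Nonempty) → (⋂ i, NSetAut g (U i) D).Nonempty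

/-- Eventual sensitivity of `(X, f_{1,∞})` with a given entourage `D`. -/
def EvSensitiveWith {X : Type*} [UniformSpace X] (f : ℕ → X → X) (D : Set (X × X)) : Prop :=
  ∀ x : X, ∀ E ∈ 𝓤 X, ∃ n k : ℕ, 0 < n ∧ 0 < k ∧
    ∃ y : X, (traj f n x, y) ∈ E ∧ (traj f (n + k) x, traj f k y) ∉ D

/-- Eventual sensitivity of `(X, f_{1,∞})`. -/
def EvSensitive {X : Type*} [UniformSpace X] (f : ℕ → X → X) : Prop :=
  ∃ D ∈ 𝓤 X, EvSensitiveWith f D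

/-- Eventual sensitivity of the autonomous system `(X, g)` with entourage `D`. -/
def EvSensitiveAutWith {X : Type*} [UniformSpace X] (g : X → X) (D : Set (X × X)) : Prop :=
  ∀ x : X, ∀ E ∈ 𝓤 X, ∃ q k : ℕ, 0 < q ∧ 0 < k ∧
    ∃ y : X, (g^[q] x, y) ∈ E ∧ (g^[q + k] x, g^[k] y) ∉ D

/-- `(x, y)` is a (topological) equicontinuity pair for `(X, f_{1,∞})`. -/
def EqPair {X : Type*} [TopologicalSpace X] (f : ℕ → X → X) (x y : X) : Prop :=
  ∀ O ∈ 𝓝 y, ∃ U ∈ 𝓝 x, ∃ V ∈ 𝓝 y, ∀ n : ℕ, 0 < n →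
    ((traj f n '' U) ∩ V).Nonempty → traj f n '' U ⊆ O

/-- `(x, y)` is a syndetic equicontinuity pair for `(X, f_{1,∞})`. -/
def SynEqPair {X : Type*} [TopologicalSpace X] (f : ℕ → X → X) (x y : X) : Prop :=
  ∀ O ∈ 𝓝 y, ∃ U ∈ 𝓝 x, ∃ V ∈ 𝓝 y,
    Syndetic {n : ℕ | ((traj f n '' U) ∩ V).Nonempty → traj f n '' U ⊆ O}

/-- `O` is a splitting neighborhood of `y` with respect to `x`. -/
def SplittingNbhd {X : Type*} [TopologicalSpace X] (f : ℕ → X → X) (x y : X) (O : Set X) :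
    Prop :=
  O ∈ 𝓝 y ∧ ∀ U ∈ 𝓝 x, ∀ V ∈ 𝓝 y, ∃ n : ℕ, 0 < n ∧
    ((traj f n '' U) ∩ V).Nonempty ∧ ¬ traj f n '' U ⊆ O

/-- A finite open cover of `X`. -/
def IsFinOpenCover {X : Type*} [TopologicalSpace X] (𝒰 : Finset (Set X)) : Prop :=
  (∀ U ∈ 𝒰, IsOpen U) ∧ ⋃₀ (↑𝒰 : Set (Set X)) = Set.univ

/-- `N(V, 𝒰)`: times at which `f_1^n(V)` is not contained in any single member of `𝒰`. -/
def HNSet {X : Type*} (f : ℕ → X → X) (V : Set X) (𝒰 : Finset (Set X)) : Set ℕ :=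
  {n : ℕ | 0 < n ∧ ∀ U ∈ 𝒰, ¬ traj f n '' V ⊆ U}

/-- `N(V, 𝒰)` for the autonomous system. -/
def HNSetAut {X : Type*} (g : X → X) (V : Set X) (𝒰 : Finset (Set X)) : Set ℕ :=
  {n : ℕ | 0 < n ∧ ∀ U ∈ 𝒰, ¬ g^[n] '' V ⊆ U}

/-- Hausdorff sensitivity of `(X, f_{1,∞})`. -/
def HSensitive {X : Type*} [TopologicalSpace X] (f : ℕ → X → X) : Prop :=
  ∃ 𝒰 : Finset (Set X), IsFinOpenCover 𝒰 ∧
    ∀ V : Set X, IsOpen V → V.Nonempty → (HNSet f V 𝒰).Nonempty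

/-- Hausdorff sensitivity of the autonomous system `(X, g)`. -/
def HSensitiveAut {X : Type*} [TopologicalSpace X] (g : X → X) : Prop :=
  ∃ 𝒰 : Finset (Set X), IsFinOpenCover 𝒰 ∧
    ∀ V : Set X, IsOpen V → V.Nonempty → (HNSetAut g V 𝒰).Nonempty

/-- Thick Hausdorff sensitivity of `(X, f_{1,∞})`. -/
def ThickHSensitive {X : Type*} [TopologicalSpace X] (f : ℕ → X → X) : Prop :=
  ∃ 𝒰 : Finset (Set X), IsFinOpenCover 𝒰 ∧
    ∀ V : Set X, IsOpen V → V.Nonempty → Thick (HNSet f V 𝒰)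

/-- Thick Hausdorff sensitivity of the autonomous system `(X, g)`. -/
def ThickHSensitiveAut {X : Type*} [TopologicalSpace X] (g : X → X) : Prop :=
  ∃ 𝒰 : Finset (Set X), IsFinOpenCover 𝒰 ∧
    ∀ V : Set X, IsOpen V → V.Nonempty → Thick (HNSetAut g V 𝒰)

/-- Multi-Hausdorff sensitivity of the autonomous system `(X, g)`. -/
def MultiHSensitiveAut {X : Type*} [TopologicalSpace X] (g : X → X) : Prop :=
  ∃ 𝒰 : Finset (Set X), IsFinOpenCover 𝒰 ∧
    ∀ (m : ℕ) (V : Fin (m + 1) → Set X),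
      (∀ i, IsOpen (V i)) → (∀ i, (V i).Nonempty) → (⋂ i, HNSetAut g (V i) 𝒰).Nonempty


/-!
If `f` is not sensitive, every entourage `E` admits a nonempty open set `U` all of whose images
`f_1^n U` (`n > 0`) are `E`-small. When the orbit of `x` under `g = f_1^p` enters `U` at time `K`,
points near `x` stay `E`-close to `x` for the finitely many times `n ≤ K p` by continuity, and
afterwards because `f_1^{Kp+m} = f_1^m ∘ g^K`. So it suffices that every point is `g`-transitive.

Let `O` be the `g`-orbit of `x`. Splitting the dense `f`-orbit of `x` into residue classes mod `p`
shows that the closed sets `closure (f_1^r O)`, `r < p`, cover `X`, so one of them has interior.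
The `g`-orbit of the transitive point `x₀` meets the `f_1^r`-preimage of that interior at some
`g^j x₀`, and applying `f_{r+1}, …, f_p` puts `g^{j+1} x₀`, hence its whole forward orbit, into
`closure O`. In a `T₁` space without isolated points a dense set stays dense after removing
finitely many points, so `closure O = X`.
-/

section

variable {X : Type*}

theorem continuous_traj [TopologicalSpace X] {f : ℕ → X → X} (hf : ∀ n, Continuous (f n)) :
    ∀ n, Continuous (traj f n)
  | 0 => continuous_id
  | n + 1 => (hf (n + 1)).comp (continuous_traj hf n)

theorem traj_add (f : ℕ → X → X) (m : ℕ) :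
    ∀ n, traj f (m + n) = traj (fun k => f (k + m)) n ∘ traj f m
  | 0 => rfl
  | n + 1 => by
    rw [← add_assoc, traj, traj, traj_add f m n, show m + n + 1 = n + 1 + m by omega]
    rfl

theorem PeriodicFam.traj_add {f : ℕ → X → X} {p : ℕ} (hper : PeriodicFam f p) (n : ℕ) :
    traj f (p + n) = traj f n ∘ traj f p := by
  rw [_root_.traj_add, show (fun k => f (k + p)) = f from funext hper]

theorem PeriodicFam.traj_mul_add {f : ℕ → X → X} {p : ℕ} (hper : PeriodicFam f p) :
    ∀ K n, traj f (K * p + n) = traj f n ∘ (traj f p)^[K]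
  | 0, n => by simp
  | K + 1, n => by
    rw [add_mul, one_mul, add_assoc, hper.traj_mul_add K, hper.traj_add,
      Function.iterate_succ', Function.comp_assoc]

theorem PeriodicFam.range_traj_subset {f : ℕ → X → X} {p : ℕ} (hper : PeriodicFam f p)
    (hp : 0 < p) (x : X) :
    range (fun n => traj f n x) ⊆
      ⋃ r : Fin p, traj f r '' range (fun k => (traj f p)^[k] x) := by
  rintro _ ⟨n, rfl⟩
  refine mem_iUnion.2 ⟨⟨n % p, Nat.mod_lt n hp⟩, _, ⟨n / p, rfl⟩, ?_⟩
  show traj f (n % p) _ = traj f n x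
  conv_rhs => rw [← Nat.div_add_mod' n p, hper.traj_mul_add]
  rfl

theorem traj_mem_closure_image_of_le [TopologicalSpace X] {f : ℕ → X → X}
    (hf : ∀ n, Continuous (f n)) {r n : ℕ} (hrn : r ≤ n) {s : Set X} {y : X}
    (hy : traj f r y ∈ closure (traj f r '' s)) : traj f n y ∈ closure (traj f n '' s) := by
  obtain ⟨m, rfl⟩ := Nat.exists_eq_add_of_le hrn
  rw [traj_add, image_comp]
  exact image_closure_subset_closure_image (continuous_traj (fun k => hf (k + r)) m)
    (mem_image_of_mem _ hy)

theorem exists_nonempty_interior_of_iUnion_eq_univ [TopologicalSpace X] [Nonempty X]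
    {ι : Type*} [Finite ι] {K : ι → Set X} (hc : ∀ i, IsClosed (K i)) (hU : ⋃ i, K i = univ) :
    ∃ i, (interior (K i)).Nonempty := by
  by_contra! h
  have hd : Dense (⋂₀ range fun i => (K i)ᶜ) :=
    (finite_range _).dense_sInter (by simpa using fun i => (hc i).isOpen_compl)
      (by simpa [← interior_eq_empty_iff_dense_compl] using h)
  rw [sInter_range, ← compl_iUnion, hU, compl_univ] at hd
  exact not_nonempty_empty hd.nonempty

theorem TransPtAut.dense_range_iterate_add [TopologicalSpace X] [T1Space X]
    [∀ x : X, NeBot (𝓝[≠] x)] {g : X → X} {x : X} (h : TransPtAut g x) (j : ℕ) :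
    Dense (range fun n => g^[n + j] x) := by
  refine (h.sdiff_finite ((finite_Iio j).image fun n => g^[n] x)).mono ?_
  rintro _ ⟨⟨n, rfl⟩, hn⟩
  have hjn : j ≤ n := by
    by_contra! hnj
    exact hn ⟨n, hnj, rfl⟩
  exact ⟨n - j, by simp only [Nat.sub_add_cancel hjn]⟩

theorem PeriodicFam.transPtAut_of_minimal [TopologicalSpace X] [T1Space X]
    [∀ x : X, NeBot (𝓝[≠] x)] {f : ℕ → X → X} (hf : ∀ n, Continuous (f n)) {p : ℕ}
    (hper : PeriodicFam f p) (hp : 0 < p) {x₀ : X} (hx₀ : TransPtAut (traj f p) x₀)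
    (hmin : ∀ x : X, TransPt f x) (x : X) : TransPtAut (traj f p) x := by
  set g := traj f p
  set O := range fun k => g^[k] x
  have hcover : ⋃ r : Fin p, closure (traj f r '' O) = univ := by
    refine eq_univ_of_univ_subset ((hmin x).closure_eq ▸ closure_minimal ?_
      (isClosed_iUnion_of_finite fun _ => isClosed_closure))
    exact (hper.range_traj_subset hp x).trans (iUnion_mono fun _ => subset_closure)
  have : Nonempty X := ⟨x⟩
  obtain ⟨r, a, ha⟩ := exists_nonempty_interior_of_iUnion_eq_univ
    (fun _ => isClosed_closure) hcover
  obtain ⟨_, hb, z, rfl⟩ : (interior (closure (traj f r '' O)) ∩ range (traj f r)).Nonempty :=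
    mem_closure_iff.1 (closure_mono (image_subset_range _ _) (interior_subset ha)) _
      isOpen_interior ha
  obtain ⟨_, ⟨j, rfl⟩, hj⟩ := hx₀.exists_mem_open
    (isOpen_interior.preimage (continuous_traj hf r)) ⟨z, hb⟩
  have hgO : MapsTo g O O := fun _ ⟨k, hk⟩ =>
    ⟨k + 1, by simp only [← hk, Function.iterate_succ_apply']⟩
  have hstep : g (g^[j] x₀) ∈ closure O :=
    closure_mono hgO.image_subset
      (traj_mem_closure_image_of_le hf r.isLt.le (interior_subset hj))
  refine dense_closure.1 ((hx₀.dense_range_iterate_add (j + 1)).mono ?_)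
  rintro _ ⟨n, rfl⟩
  show g^[n + (j + 1)] x₀ ∈ closure O
  rw [Function.iterate_add_apply, Function.iterate_succ_apply']
  exact (hgO.closure (continuous_traj hf p)).iterate n hstep

theorem exists_isOpen_forall_traj_mem_of_not_sensitive [UniformSpace X] {f : ℕ → X → X}
    (hs : ¬Sensitive f) {E : Set (X × X)} (hE : E ∈ 𝓤 X) :
    ∃ U : Set X, IsOpen U ∧ U.Nonempty ∧
      ∀ n, 0 < n → ∀ u ∈ U, ∀ v ∈ U, (traj f n u, traj f n v) ∈ E := by
  simp only [Sensitive, NSet, not_exists, not_and, not_forall, not_nonempty_iff_eq_empty] at hs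
  obtain ⟨U, hUo, hU, hempty⟩ := hs E hE
  refine ⟨U, hUo, hU, fun n hn u hu v hv => ?_⟩
  by_contra h
  exact (eq_empty_iff_forall_notMem.1 hempty n) ⟨hn, u, hu, v, hv, h⟩

theorem PeriodicFam.eqPt_of_not_sensitive [UniformSpace X] {f : ℕ → X → X}
    (hf : ∀ n, Continuous (f n)) {p : ℕ} (hper : PeriodicFam f p) (hs : ¬Sensitive f)
    {x : X} (hx : TransPtAut (traj f p) x) : EqPt f x := by
  intro E hE
  obtain ⟨U, hUo, hU, hUE⟩ := exists_isOpen_forall_traj_mem_of_not_sensitive hs hE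
  obtain ⟨_, ⟨K, rfl⟩, hK⟩ := hx.exists_mem_open hUo hU
  have hnear : ∀ᶠ y in 𝓝 x, (∀ n ∈ Iic (K * p), (traj f n x, traj f n y) ∈ E) ∧
      (traj f p)^[K] y ∈ U :=
    ((eventually_all_finite (finite_Iic _)).2 fun n _ =>
        (continuous_traj hf n).continuousAt.eventually (mem_nhds_left _ hE)).and
      (((continuous_traj hf p).iterate K).continuousAt.eventually (hUo.mem_nhds hK))
  obtain ⟨D, hD, hDsub⟩ := UniformSpace.mem_nhds_iff.1 hnear
  refine ⟨D, hD, fun y hy n => ?_⟩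
  obtain ⟨hfirst, hyU⟩ := hDsub hy
  rcases le_or_gt n (K * p) with hn | hn
  · exact hfirst n hn
  · obtain ⟨m, rfl⟩ := Nat.exists_eq_add_of_lt hn
    rw [add_assoc, hper.traj_mul_add]
    exact hUE _ (Nat.succ_pos m) _ hK _ hyU

end

/-- Auslander–Yorke dichotomy for minimal periodic non-autonomous systems. -/
theorem auslander_yorke_minimal {X : Type*} [UniformSpace X] [T2Space X]
    (hiso : ∀ x : X, (𝓝[≠] x).NeBot)
    (f : ℕ → X → X) (hf : ∀ n, Continuous (f n))
    (p : ℕ) (hp : 0 < p) (hper : PeriodicFam f p)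
    (htrans : ∃ x, TransPtAut (traj f p) x)
    (hmin : ∀ x : X, TransPt f x) :
    Sensitive f ∨ (∀ x : X, EqPt f x) := by
  obtain ⟨x₀, hx₀⟩ := htrans
  refine or_iff_not_imp_left.2 fun hs x => hper.eqPt_of_not_sensitive hf hs ?_
  exact hper.transPtAut_of_minimal hf hp hx₀ hmin x
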